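/- Let k be an even integer and s ∈ ℂ with 2·Re(s) + k > 3. Then: (i) for every Z ∈ ℍ₂, Im φ(Z) = Im(τ + 2z + τ') > 0, so Φ_{k,s}(Z) is defined; (ii) the double series δ(Z)^s Σ_{g,h ∈ Γ_∞\Γ} χ_{k,s}(g• h_•, Z) defining A_k(Z,s) converges absolutely; and (iii) the series δ(Z)^s Σ_{g ∈ Γ} Φ_{k,s}(g_•(Z)) χ_{k,s}(g_•, Z) defining B_k(Z,s) converges absolutely. -/

import Mathlib

open Matrix Complex Filter Topology

noncomputable section

abbrev M2C := Matrix (Fin 2) (Fin 2) ℂ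
abbrev M2R := Matrix (Fin 2) (Fin 2) ℝ
abbrev M2Q := Matrix (Fin 2) (Fin 2) ℚ
abbrev M4R := Matrix (Fin 2 ⊕ Fin 2) (Fin 2 ⊕ Fin 2) ℝ

/-- The standard symplectic form of degree 2. -/
def J4 : M4R := Matrix.fromBlocks 0 1 (-1) 0

/-- `g` is a real symplectic matrix of degree 2. -/
def IsSymplectic (g : M4R) : Prop := gᵀ * J4 * g = J4

/-- all entries of `g` are integers -/
def IsIntegral4 (g : M4R) : Prop := ∀ i j, ∃ n : ℤ, g i j = (n : ℝ)

/-- The Siegel modular group `Γ₂ = Sp₂(ℤ)` (as a set of real matrices). -/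
def Sp2Z : Set M4R := {g | IsSymplectic g ∧ IsIntegral4 g}

/-- `Γ_{2,0}`: elements of `Γ₂` whose lower-left 2×2 block is `0`. -/
def Gamma20 : Set M4R := {g | g ∈ Sp2Z ∧ Matrix.toBlocks₂₁ g = 0}

/-- entrywise coercion of a real 4×4 matrix to a complex one -/
def mapC (g : M4R) : Matrix (Fin 2 ⊕ Fin 2) (Fin 2 ⊕ Fin 2) ℂ := g.map (fun x => (x : ℂ))

/-- The action `g(Z) = (AZ+B)(CZ+D)⁻¹` of `Sp₂(ℝ)` on the Siegel upper half space. -/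
def smul4 (g : M4R) (Z : M2C) : M2C :=
  ((mapC g).toBlocks₁₁ * Z + (mapC g).toBlocks₁₂) * ((mapC g).toBlocks₂₁ * Z + (mapC g).toBlocks₂₂)⁻¹

/-- The factor of automorphy `j(g,Z) = det (CZ + D)`. -/
def jfac (g : M4R) (Z : M2C) : ℂ := ((mapC g).toBlocks₂₁ * Z + (mapC g).toBlocks₂₂).det

/-- entrywise imaginary part -/
def ImM (Z : M2C) : M2R := Z.map Complex.im

/-- The Siegel upper half space of degree 2. -/
def SiegelH2 : Set M2C := {Z | Z.IsSymm ∧ (ImM Z).PosDef}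

/-- `δ(Z) := det (Im Z)` -/
def Hdelta (Z : M2C) : ℝ := (ImM Z).det

/-- The summand `j(g,Z)^{-k} δ(g(Z))^s` of the Siegel Eisenstein series. -/
def eisSummand (k : ℤ) (s : ℂ) (g : M4R) (Z : M2C) : ℂ :=
  jfac g Z ^ (-k) * ((Hdelta (smul4 g Z) : ℂ)) ^ s

/-- `Γ = SL₂(ℤ)` as a set of real 2×2 matrices. -/
def SL2Zset : Set M2R := {g | g.det = 1 ∧ ∀ i j, ∃ n : ℤ, g i j = (n : ℝ)}

/-- `Γ_∞`: upper triangular elements of `SL₂(ℤ)`. -/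
def GammaInf : Set M2R := {g | g ∈ SL2Zset ∧ g 1 0 = 0}

/-- The embedding `(A,B) ↦ A × B` of pairs of 2×2 matrices into 4×4 matrices. -/
def emb (A B : M2R) : M4R :=
  Matrix.fromBlocks !![A 0 0, 0; 0, B 0 0] !![A 0 1, 0; 0, B 0 1]
                    !![A 1 0, 0; 0, B 1 0] !![A 1 1, 0; 0, B 1 1]

/-- `g• := g × 1` -/
def embUp (A : M2R) : M4R := emb A 1

/-- `g_• := 1 × g` -/
def embLow (B : M2R) : M4R := emb 1 B

/-- `χ_{k,s}(g,Z) = j(g,Z)^{-k} |j(g,Z)|^{-2s}` -/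
def chiF (k : ℤ) (s : ℂ) (g : M4R) (Z : M2C) : ℂ :=
  jfac g Z ^ (-k) * ((‖jfac g Z‖ : ℂ)) ^ (-(2 * s))

/-- `φ(Z) = τ + 2z + τ'` -/
def phiF (Z : M2C) : ℂ := Z 0 0 + 2 * Z 0 1 + Z 1 1

/-- `Φ_{k,s}(Z) = φ(Z)^{-k} |φ(Z)|^{-2s}` -/
def PhiF (k : ℤ) (s : ℂ) (Z : M2C) : ℂ :=
  phiF Z ^ (-k) * ((‖phiF Z‖ : ℂ)) ^ (-(2 * s))

/-- The Petersson slash operator `(F|_k g)(Z) = j(g,Z)^{-k} F(g(Z))`. -/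
def slashOp (k : ℤ) (g : M4R) (F : M2C → ℂ) (Z : M2C) : ℂ := jfac g Z ^ (-k) * F (smul4 g Z)

/-- The Siegel modular group as a type. -/
def Sp2ZT := {g : M4R // g ∈ Sp2Z}

/-- the left coset relation for `Γ_{2,0} \ Γ₂` -/
def rel20 (g g' : Sp2ZT) : Prop := ∃ γ ∈ Gamma20, g'.1 = γ * g.1

/-- `SL₂(ℤ)` as a type. -/
def SL2ZT := {g : M2R // g ∈ SL2Zset}

/-- the left coset relation for `Γ_∞ \ Γ` -/
def relInf (g g' : SL2ZT) : Prop := ∃ γ ∈ GammaInf, g'.1 = γ * g.1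

/-- a choice of representative of an equivalence class -/
def qout {α : Sort*} {r : α → α → Prop} (q : Quot r) : α := Classical.choose (Quot.exists_rep q)

/-- The real analytic Siegel Eisenstein series of degree 2:
`E_k^{(2)}(Z,s) = Σ_{g ∈ Γ_{2,0}\Γ₂} j(g,Z)^{-k} δ(g(Z))^s`. -/
def Eis (k : ℤ) (s : ℂ) (Z : M2C) : ℂ := ∑' q : Quot rel20, eisSummand k s (qout q).1 Z

/-- `B_k(Z,s) = δ(Z)^s Σ_{g ∈ Γ} Φ_{k,s}(g_•(Z)) χ_{k,s}(g_•,Z)` -/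
def Bk (k : ℤ) (s : ℂ) (W : M2C) : ℂ :=
  ((Hdelta W : ℂ)) ^ s * ∑' g : SL2ZT, PhiF k s (smul4 (embLow g.1) W) * chiF k s (embLow g.1) W

/-- `A_k(Z,s) = δ(Z)^s Σ_{g,h ∈ Γ_∞\Γ} χ_{k,s}(g• h_•, Z)` -/
def Ak (k : ℤ) (s : ℂ) (Z : M2C) : ℂ :=
  ((Hdelta Z : ℂ)) ^ s *
    ∑' q : Quot relInf × Quot relInf, chiF k s (embUp (qout q.1).1 * embLow (qout q.2).1) Z

/-- The normalized Hecke operator `T_p` applied via the upper embedding `•`. -/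
def TpUp (k : ℤ) (p : ℕ) (F : M2C → ℂ) (Z : M2C) : ℂ :=
  (p : ℂ) ^ ((k : ℂ) / 2 - 1) *
    (slashOp k (embUp (((p : ℝ) ^ (-(1:ℝ)/2)) • !![(p:ℝ), 0; 0, 1])) F Z +
      ∑ a : Fin p, slashOp k (embUp (((p : ℝ) ^ (-(1:ℝ)/2)) • !![1, ((a:ℕ):ℝ); 0, (p:ℝ)])) F Z)

/-- The normalized Hecke operator `T_p` applied via the lower embedding `_•`. -/
def TpLow (k : ℤ) (p : ℕ) (F : M2C → ℂ) (Z : M2C) : ℂ :=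
  (p : ℂ) ^ ((k : ℂ) / 2 - 1) *
    (slashOp k (embLow (((p : ℝ) ^ (-(1:ℝ)/2)) • !![(p:ℝ), 0; 0, 1])) F Z +
      ∑ a : Fin p, slashOp k (embLow (((p : ℝ) ^ (-(1:ℝ)/2)) • !![1, ((a:ℕ):ℝ); 0, (p:ℝ)])) F Z)

/-- `SL₂(ℤ)` as a set of rational matrices. -/
def SL2Qint : Set M2Q := {g | g.det = 1 ∧ ∀ i j, ∃ n : ℤ, g i j = (n : ℚ)}

/-- the left coset `Γ g` in `GL₂(ℚ)` -/
def leftCosetQ (g : M2Q) : Set M2Q := {x | ∃ γ ∈ SL2Qint, x = γ * g}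

/-- the double coset `Γ g Γ` in `GL₂(ℚ)` -/
def doubleCosetQ (g : M2Q) : Set M2Q := {x | ∃ γ₁ ∈ SL2Qint, ∃ γ₂ ∈ SL2Qint, x = γ₁ * g * γ₂}

/-- `d_m = [[m,0],[0,m⁻¹]]` -/
def dmQ (m : ℕ) : M2Q := !![(m:ℚ), 0; 0, (m:ℚ)⁻¹]

/-- entrywise coercion `ℚ → ℝ` -/
def mapR (g : M2Q) : M2R := g.map (fun x => (x : ℝ))

/-- `γ 0, …, γ (r-1)` is a system of representatives for the left cosets of `Γ`
contained in the double coset `Γ d_m Γ`. -/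
def IsRepSystem (m : ℕ) (r : ℕ) (γ : Fin r → M2Q) : Prop :=
  (∀ j, γ j ∈ doubleCosetQ (dmQ m)) ∧
  (⋃ j, leftCosetQ (γ j)) = doubleCosetQ (dmQ m) ∧
  (∀ j j', j ≠ j' → Disjoint (leftCosetQ (γ j)) (leftCosetQ (γ j')))

/-- the matrices `g_m` -/
def gmMat (m : ℕ) : M4R :=
  Matrix.fromBlocks !![0,0;0,1] !![-1,0;0,0] !![1,(m:ℝ);0,0] !![0,0;-(m:ℝ),1]

/-- `J_m = [[0,1/m],[m,0]]` -/
def JmMat (m : ℕ) : M2R := !![0, 1/(m:ℝ); (m:ℝ), 0]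

/-- `Γ(m) = {g ∈ Γ : J_m g J_m ∈ Γ}` -/
def GammaM (m : ℕ) : Set M2R := {g | g ∈ SL2Zset ∧ JmMat m * g * JmMat m ∈ SL2Zset}

/-- the left coset `Γ_{2,0} x` -/
def C20 (x : M4R) : Set M4R := {y | ∃ γ ∈ Gamma20, y = γ * x}

/-- `g^# = [[d,b],[c,a]]` -/
def sharp (g : M2R) : M2R := !![g 1 1, g 0 1; g 1 0, g 0 0]

/-- half-integral symmetric matrix `[[n, r/2],[r/2, m]]` -/
def halfIntMat (n r m : ℤ) : M2R := !![(n:ℝ), (r:ℝ)/2; (r:ℝ)/2, (m:ℝ)]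

def IsHalfIntegral (M : M2R) : Prop := ∃ n r m : ℤ, M = halfIntMat n r m

/-- `Z = X + iY` -/
def mkZ (X Y : M2R) : M2C := X.map (fun x => (x:ℂ)) + Complex.I • Y.map (fun x => (x:ℂ))

/-- `j([[a,b],[c,d]], τ) = cτ + d` on the upper half plane -/
def jSL (g : M2R) (τ : ℂ) : ℂ := (g 1 0 : ℝ) * τ + ((g 1 1 : ℝ) : ℂ)

/-- the Möbius action of `GL₂⁺(ℝ)` on the upper half plane -/
def moeb (g : M2R) (τ : ℂ) : ℂ := (((g 0 0 : ℝ) : ℂ) * τ + ((g 0 1 : ℝ) : ℂ)) / (((g 1 0 : ℝ) : ℂ) * τ + ((g 1 1 : ℝ) : ℂ))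

/-- the degree 1 real analytic Eisenstein series `E_k(τ,s) = Σ_{g ∈ Γ_∞\Γ} j(g,τ)^{-k} Im(g(τ))^s` -/
def E1 (k : ℤ) (s : ℂ) (τ : ℂ) : ℂ :=
  ∑' q : Quot relInf, jSL (qout q).1 τ ^ (-k) * ((((moeb (qout q).1 τ).im : ℝ) : ℂ)) ^ s

/-
Write `Z = [[τ, z], [z, τ']]`. If `(c, d)` and `(c', d')` are the bottom rows of `g, h ∈ Γ`, then
`j(g• h_•, Z) = (c'τ' + d') (c w + d)` with `w = τ - c' z² / (c'τ' + d')`. One checks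
`Im w ≥ δ(Z) / Im τ'` and `|Re w| ≤ |Re τ| + |z|² / Im τ'`, so `w` stays in a fixed vertical strip,
on which the classical bound `|c w + d| ≥ ρ ‖(c, d)‖` holds uniformly. The summand of `A_k` is
therefore `O((‖(c, d)‖ ‖(c', d')‖)^{-(k + 2 Re s)})`, which is summable over pairs of integer
vectors because `k + 2 Re s > 2`; the bottom row determines the coset in `Γ_∞ \ Γ`, and evenness
of `k` makes the summand independent of the coset representatives.

For `B_k` the same identity gives `Im φ(g_•Z) ≥ δ(Z) / Im τ'`, while replacing `g` by
`[[1, t], [0, 1]] g` translates `φ(g_•Z)` by `t`. So `g ↦ ((c, d), ⌊Re φ(g_•Z)⌋)` is injective and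
`|φ(g_•Z)| ≥ ρ ‖(1, ⌊Re φ(g_•Z)⌋)‖`, which yields a majorant of the same shape.
-/

lemma embUp_mul_embLow (A B : M2R) : embUp A * embLow B = emb A B := by
  ext (i | i) (j | j) <;> fin_cases i <;> fin_cases j <;>
    simp [embUp, embLow, emb, mul_apply, Fintype.sum_sum_type, Fin.sum_univ_two]

lemma jfac_emb (A B : M2R) (Z : M2C) :
    jfac (emb A B) Z = (A 1 0 * Z 0 0 + A 1 1) * (B 1 0 * Z 1 1 + B 1 1)
      - A 1 0 * B 1 0 * (Z 0 1 * Z 1 0) := by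
  simp only [jfac, mapC, emb, fromBlocks_map, toBlocks_fromBlocks₂₁, toBlocks_fromBlocks₂₂,
    det_fin_two, Matrix.add_apply, mul_apply, map_apply, of_apply, cons_val', cons_val_fin_one,
    cons_val_zero, cons_val_one, Fin.sum_univ_two, ofReal_zero, zero_mul, add_zero, zero_add]
  ring

lemma jfac_embLow (B : M2R) (Z : M2C) : jfac (embLow B) Z = B 1 0 * Z 1 1 + B 1 1 := by
  simp [embLow, jfac_emb]

lemma jfac_emb_mul_left {γ : M2R} (hγ : γ 1 0 = 0) (A B : M2R) (Z : M2C) :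
    jfac (emb (γ * A) B) Z = γ 1 1 * jfac (emb A B) Z := by
  simp only [jfac_emb, mul_apply, Fin.sum_univ_two, hγ]
  push_cast
  ring

lemma jfac_emb_mul_right {γ : M2R} (hγ : γ 1 0 = 0) (A B : M2R) (Z : M2C) :
    jfac (emb A (γ * B)) Z = γ 1 1 * jfac (emb A B) Z := by
  simp only [jfac_emb, mul_apply, Fin.sum_univ_two, hγ]
  push_cast
  ring

lemma phiF_smul_embLow (g : M2R) (Z : M2C) (hj : g 1 0 * Z 1 1 + g 1 1 ≠ 0) :
    phiF (smul4 (embLow g) Z) = Z 0 0 +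
      (2 * Z 0 1 + g 0 0 * Z 1 1 + g 0 1 - g 1 0 * (Z 0 1 * Z 1 0)) / (g 1 0 * Z 1 1 + g 1 1) := by
  have hinv : ((mapC (embLow g)).toBlocks₂₁ * Z + (mapC (embLow g)).toBlocks₂₂)⁻¹
      = !![1, 0; -(g 1 0 * Z 1 0) / (g 1 0 * Z 1 1 + g 1 1), 1 / (g 1 0 * Z 1 1 + g 1 1)] := by
    refine inv_eq_right_inv ?_
    ext i k; fin_cases i <;> fin_cases k <;>
      simp [mapC, embLow, emb, fromBlocks_map, mul_apply, Fin.sum_univ_two] <;> field_simp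
    ring
  rw [phiF, smul4, hinv]
  simp [mapC, embLow, emb, fromBlocks_map, mul_apply, Fin.sum_univ_two]
  field_simp
  ring

lemma phiF_smul_embLow_T_mul (t : ℝ) (g : M2R) (Z : M2C) (hj : g 1 0 * Z 1 1 + g 1 1 ≠ 0) :
    phiF (smul4 (embLow (!![1, t; 0, 1] * g)) Z) = phiF (smul4 (embLow g) Z) + t := by
  have h10 : (!![1, t; 0, 1] * g) 1 0 = g 1 0 := by simp [mul_apply, Fin.sum_univ_two]
  have h11 : (!![1, t; 0, 1] * g) 1 1 = g 1 1 := by simp [mul_apply, Fin.sum_univ_two]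
  rw [phiF_smul_embLow _ _ (by rwa [h10, h11]), phiF_smul_embLow _ _ hj, h10, h11]
  simp only [mul_apply, of_apply, cons_val', cons_val_fin_one, cons_val_zero, cons_val_one,
    Fin.sum_univ_two, one_mul, ofReal_add, ofReal_mul]
  field_simp
  ring

def weightPow (k : ℤ) (s : ℂ) (J : ℂ) : ℂ := J ^ (-k) * (‖J‖ : ℂ) ^ (-(2 * s))

lemma chiF_eq_weightPow (k : ℤ) (s : ℂ) (g : M4R) (Z : M2C) :
    chiF k s g Z = weightPow k s (jfac g Z) := rfl

lemma PhiF_eq_weightPow (k : ℤ) (s : ℂ) (Z : M2C) : PhiF k s Z = weightPow k s (phiF Z) := rfl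

lemma weightPow_mul (k : ℤ) (s a b : ℂ) :
    weightPow k s a * weightPow k s b = weightPow k s (a * b) := by
  simp only [weightPow, mul_zpow, norm_mul, ofReal_mul,
    mul_cpow_ofReal_nonneg (norm_nonneg a) (norm_nonneg b)]
  ring

lemma weightPow_neg {k : ℤ} (hk : Even k) (s J : ℂ) : weightPow k s (-J) = weightPow k s J := by
  simp [weightPow, Even.neg_zpow hk.neg]

lemma norm_weightPow (k : ℤ) (s : ℂ) {J : ℂ} (hJ : J ≠ 0) :
    ‖weightPow k s J‖ = ‖J‖ ^ (-(k + 2 * s.re)) := by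
  have hJ' : 0 < ‖J‖ := norm_pos_iff.mpr hJ
  rw [weightPow, norm_mul, norm_zpow, norm_cpow_eq_rpow_re_of_pos hJ', ← Real.rpow_intCast,
    ← Real.rpow_add hJ']
  congr 1
  simp only [neg_re, mul_re, re_ofNat, im_ofNat, Int.cast_neg]
  ring

def bottomRow (g : SL2ZT) : Fin 2 → ℤ := fun j => Classical.choose (g.2.2 1 j)

lemma bottomRow_spec (g : SL2ZT) (j : Fin 2) : g.1 1 j = bottomRow g j :=
  Classical.choose_spec (g.2.2 1 j)

lemma bottomRow_ne_zero (g : SL2ZT) : bottomRow g ≠ 0 := by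
  intro h
  have hdet := g.2.1
  rw [det_fin_two, bottomRow_spec g 0, bottomRow_spec g 1, h] at hdet
  simp at hdet

lemma exists_eq_T_mul_of_bottomRow_eq {g g' : SL2ZT} (h : bottomRow g = bottomRow g') :
    ∃ t : ℤ, g'.1 = !![1, (t : ℝ); 0, 1] * g.1 := by
  obtain ⟨a, ha⟩ := g.2.2 0 0
  obtain ⟨b, hb⟩ := g.2.2 0 1
  obtain ⟨a', ha'⟩ := g'.2.2 0 0
  obtain ⟨b', hb'⟩ := g'.2.2 0 1
  have hc : g'.1 1 0 = g.1 1 0 := by rw [bottomRow_spec, bottomRow_spec, h]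
  have hd : g'.1 1 1 = g.1 1 1 := by rw [bottomRow_spec, bottomRow_spec, h]
  have hdet := g.2.1
  have hdet' := g'.2.1
  rw [det_fin_two, ha, hb] at hdet
  rw [det_fin_two, ha', hb', hc, hd] at hdet'
  refine ⟨a * b' - a' * b, ?_⟩
  ext i j
  fin_cases i <;> fin_cases j <;> simp [mul_apply, Fin.sum_univ_two, ha, hb, ha', hb', hc, hd]
  · linear_combination a * hdet' - a' * hdet
  · linear_combination b * hdet' - b' * hdet

lemma T_mem_GammaInf (t : ℤ) : !![1, (t : ℝ); 0, 1] ∈ GammaInf := by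
  refine ⟨⟨by simp [det_fin_two], fun i j => ?_⟩, rfl⟩
  fin_cases i <;> fin_cases j
  exacts [⟨1, by simp⟩, ⟨t, rfl⟩, ⟨0, by simp⟩, ⟨1, by simp⟩]

lemma bottomRow_out_injective : Function.Injective fun q : Quot relInf => bottomRow q.out := by
  intro q q' h
  obtain ⟨t, ht⟩ := exists_eq_T_mul_of_bottomRow_eq h
  rw [← q.out_eq, ← q'.out_eq]
  exact Quot.sound ⟨_, T_mem_GammaInf t, ht⟩

lemma GammaInf_apply_one_one_eq_one_or_neg_one {γ : M2R} (hγ : γ ∈ GammaInf) :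
    γ 1 1 = 1 ∨ γ 1 1 = -1 := by
  obtain ⟨⟨hdet, hint⟩, h10⟩ := hγ
  obtain ⟨m, hm⟩ := hint 0 0
  obtain ⟨n, hn⟩ := hint 1 1
  rw [det_fin_two, h10, hm, hn] at hdet
  have hmn : m * n = 1 := by exact_mod_cast (by simpa using hdet : (m : ℝ) * n = 1)
  rcases Int.eq_one_or_neg_one_of_mul_eq_one' hmn with ⟨-, rfl⟩ | ⟨-, rfl⟩ <;> simp [hn]

lemma chiF_emb_mul_left {k : ℤ} (hk : Even k) (s : ℂ) {γ : M2R} (hγ : γ ∈ GammaInf)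
    (A B : M2R) (Z : M2C) : chiF k s (emb (γ * A) B) Z = chiF k s (emb A B) Z := by
  rw [chiF_eq_weightPow, chiF_eq_weightPow, jfac_emb_mul_left hγ.2]
  rcases GammaInf_apply_one_one_eq_one_or_neg_one hγ with h | h <;> simp [h, weightPow_neg hk]

lemma chiF_emb_mul_right {k : ℤ} (hk : Even k) (s : ℂ) {γ : M2R} (hγ : γ ∈ GammaInf)
    (A B : M2R) (Z : M2C) : chiF k s (emb A (γ * B)) Z = chiF k s (emb A B) Z := by
  rw [chiF_eq_weightPow, chiF_eq_weightPow, jfac_emb_mul_right hγ.2]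
  rcases GammaInf_apply_one_one_eq_one_or_neg_one hγ with h | h <;> simp [h, weightPow_neg hk]

lemma exists_pos_mul_norm_le_of_verticalStrip (A : ℝ) {B : ℝ} (hB : 0 < B) :
    ∃ ρ > 0, ∀ w : ℂ, |w.re| ≤ A → B ≤ w.im →
      ∀ x : Fin 2 → ℤ, ρ * ‖x‖ ≤ ‖(x 0 : ℂ) * w + x 1‖ := by
  refine ⟨EisensteinSeries.r ⟨⟨A, B⟩, hB⟩, EisensteinSeries.r_pos _, fun w hre him x => ?_⟩
  rcases eq_or_ne x 0 with rfl | hx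
  · simp
  let z : UpperHalfPlane := ⟨w, hB.trans_le him⟩
  calc _ ≤ EisensteinSeries.r z * ‖x‖ := by
        gcongr
        exact EisensteinSeries.r_lower_bound_on_verticalStrip z hB ⟨hre, him⟩
    _ ≤ _ := EisensteinSeries.r_mul_max_le z hx

lemma normSq_ofReal_mul_add_ofReal (c d : ℝ) (w : ℂ) :
    normSq (c * w + d) = (c * w.re + d) ^ 2 + (c * w.im) ^ 2 := by
  simp [normSq_apply, sq]

/- For `g = [[a, b], [c, d]]`, the expression in `im_sub_div_ge` is `(g_•Z)₀₀` and the one in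
`im_add_div_ge` is `φ(g_•Z)`. With `Y = Im (g_•Z)` both bounds are `xᵀ Y x ≥ det Y / Y₁₁`, and
`det Y / Y₁₁ = δ(Z) / Im τ'` because numerator and denominator both scale by `|cτ' + d|⁻²`. -/
lemma im_sub_div_ge (τ z τ' : ℂ) (c d : ℝ) (hτ' : 0 < τ'.im) (hj : (c : ℂ) * τ' + d ≠ 0) :
    (τ.im * τ'.im - z.im ^ 2) / τ'.im ≤ (τ - c * z ^ 2 / (c * τ' + d)).im := by
  have hD := normSq_pos.mpr hj
  have key : (τ - c * z ^ 2 / (c * τ' + d)).im - (τ.im * τ'.im - z.im ^ 2) / τ'.im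
      = (z.im * (c * τ'.re + d) - z.re * (c * τ'.im)) ^ 2 / (τ'.im * normSq (c * τ' + d)) := by
    rw [sub_im, div_im, normSq_ofReal_mul_add_ofReal]
    rw [normSq_ofReal_mul_add_ofReal] at hD
    generalize hDdef : (c * τ'.re + d) ^ 2 + (c * τ'.im) ^ 2 = D at hD ⊢
    simp only [sq, mul_im, mul_re, add_re, add_im, ofReal_re, ofReal_im, zero_mul, add_zero,
      sub_zero]
    field_simp
    rw [← hDdef]
    ring
  rw [← sub_nonneg, key]
  exact div_nonneg (sq_nonneg _) (mul_nonneg hτ'.le (normSq_nonneg _))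

lemma im_add_div_ge (τ z τ' : ℂ) {a b c d : ℝ} (hdet : a * d - b * c = 1) (hτ' : 0 < τ'.im)
    (hj : (c : ℂ) * τ' + d ≠ 0) :
    (τ.im * τ'.im - z.im ^ 2) / τ'.im
      ≤ (τ + (2 * z + a * τ' + b - c * z ^ 2) / (c * τ' + d)).im := by
  have hD := normSq_pos.mpr hj
  have key : (τ + (2 * z + a * τ' + b - c * z ^ 2) / (c * τ' + d)).im
        - (τ.im * τ'.im - z.im ^ 2) / τ'.im
      = (z.im * (c * τ'.re + d) - z.re * (c * τ'.im) + τ'.im) ^ 2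
          / (τ'.im * normSq (c * τ' + d)) := by
    rw [add_im, div_im, normSq_ofReal_mul_add_ofReal]
    rw [normSq_ofReal_mul_add_ofReal] at hD
    generalize hDdef : (c * τ'.re + d) ^ 2 + (c * τ'.im) ^ 2 = D at hD ⊢
    simp only [sq, mul_im, mul_re, add_re, add_im, sub_re, sub_im, ofReal_re, ofReal_im,
      re_ofNat, im_ofNat, zero_mul, add_zero, sub_zero]
    field_simp
    rw [← hDdef]
    linear_combination (τ'.im ^ 2) * hdet
  rw [← sub_nonneg, key]
  exact div_nonneg (sq_nonneg _) (mul_nonneg hτ'.le (normSq_nonneg _))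

lemma norm_ofReal_mul_div_le (c d : ℝ) (u τ' : ℂ) (hτ' : 0 < τ'.im) :
    ‖c * u / (c * τ' + d)‖ ≤ ‖u‖ / τ'.im := by
  rcases eq_or_ne c 0 with rfl | hc
  · simp only [ofReal_zero, zero_mul, zero_div, norm_zero]
    positivity
  have hj : |c| * τ'.im ≤ ‖(c : ℂ) * τ' + d‖ := by
    simpa [abs_mul, abs_of_pos hτ'] using abs_im_le_norm ((c : ℂ) * τ' + d)
  calc ‖c * u / (c * τ' + d)‖ = |c| * ‖u‖ / ‖(c : ℂ) * τ' + d‖ := by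
        rw [norm_div, norm_mul, norm_real, Real.norm_eq_abs]
    _ ≤ |c| * ‖u‖ / (|c| * τ'.im) := by gcongr
    _ = ‖u‖ / τ'.im := mul_div_mul_left _ _ (abs_ne_zero.mpr hc)

lemma exists_pos_mul_norm_floor_le {B : ℝ} (hB : 0 < B) :
    ∃ ρ > 0, ∀ w : ℂ, B ≤ w.im → ρ * ‖![1, ⌊w.re⌋]‖ ≤ ‖w‖ := by
  obtain ⟨ρ, hρ, h⟩ := exists_pos_mul_norm_le_of_verticalStrip 1 hB
  refine ⟨ρ, hρ, fun w hw => ?_⟩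
  have hre : |(w - ⌊w.re⌋).re| ≤ 1 := by
    rw [sub_re, intCast_re, ← Int.fract, abs_of_nonneg (Int.fract_nonneg _)]
    exact (Int.fract_lt_one _).le
  simpa using h (w - ⌊w.re⌋) hre (by simpa using hw) ![1, ⌊w.re⌋]

lemma norm_ofReal_cpow_mul_weightPow_le {δ : ℝ} (hδ : 0 < δ) {k : ℤ} {s : ℂ}
    (hα : 0 ≤ k + 2 * s.re) {C n : ℝ} (hC : 0 < C) (hn : 0 < n) {J : ℂ} (hJ : C * n ≤ ‖J‖) :
    ‖(δ : ℂ) ^ s * weightPow k s J‖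
      ≤ δ ^ s.re * C ^ (-(k + 2 * s.re)) * n ^ (-(k + 2 * s.re)) := by
  have hJ0 : J ≠ 0 := norm_pos_iff.mp ((mul_pos hC hn).trans_le hJ)
  rw [norm_mul, norm_cpow_eq_rpow_re_of_pos hδ, norm_weightPow k s hJ0, mul_assoc,
    ← Real.mul_rpow hC.le hn.le]
  exact mul_le_mul_of_nonneg_left
    (Real.rpow_le_rpow_of_nonpos (mul_pos hC hn) hJ (neg_nonpos.mpr hα)) (by positivity)

lemma summable_of_le_mul_norm_rpow {ι : Type*} {f : ι → ℝ}
    (e : ι → (Fin 2 → ℤ) × (Fin 2 → ℤ)) (he : Function.Injective e) {α : ℝ} (hα : 2 < α) (C : ℝ)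
    (hf0 : ∀ i, 0 ≤ f i)
    (hf : ∀ i, f i ≤ C * (‖(e i).1‖ * ‖(e i).2‖) ^ (-α)) : Summable f := by
  have hsum := EisensteinSeries.summable_one_div_norm_rpow hα
  have hprod :
      Summable fun p : (Fin 2 → ℤ) × (Fin 2 → ℤ) => C * (‖p.1‖ * ‖p.2‖) ^ (-α) := by
    simpa only [Real.mul_rpow (norm_nonneg _) (norm_nonneg _)] using
      (hsum.mul_of_nonneg hsum (fun _ => by positivity) (fun _ => by positivity)).mul_left C
  exact hprod.comp_injective he |>.of_nonneg_of_le hf0 hf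

namespace SiegelH2

lemma symm {Z : M2C} (hZ : Z ∈ SiegelH2) : Z 1 0 = Z 0 1 := by
  simpa using congr_fun (congr_fun hZ.1 0) 1

lemma im_quadratic_pos {Z : M2C} (hZ : Z ∈ SiegelH2) {x : Fin 2 → ℝ} (hx : x ≠ 0) :
    0 < x 0 ^ 2 * (Z 0 0).im + 2 * x 0 * x 1 * (Z 0 1).im + x 1 ^ 2 * (Z 1 1).im := by
  have h := hZ.2.dotProduct_mulVec_pos hx
  simp only [dotProduct, Pi.star_apply, star_trivial, mulVec, ImM, map_apply, Fin.sum_univ_two,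
    symm hZ] at h
  linarith

lemma im_one_one_pos {Z : M2C} (hZ : Z ∈ SiegelH2) : 0 < (Z 1 1).im := by
  simpa using im_quadratic_pos hZ (x := ![0, 1]) (fun h => by simpa using congrFun h 1)

lemma im_phiF_pos {Z : M2C} (hZ : Z ∈ SiegelH2) : 0 < (phiF Z).im := by
  have h := im_quadratic_pos hZ (x := ![1, 1]) (fun h => by simpa using congrFun h 1)
  simp only [phiF, add_im, mul_im, re_ofNat, im_ofNat]
  simp at h
  linarith

lemma Hdelta_eq {Z : M2C} (hZ : Z ∈ SiegelH2) :
    Hdelta Z = (Z 0 0).im * (Z 1 1).im - (Z 0 1).im ^ 2 := by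
  simp [Hdelta, ImM, det_fin_two, symm hZ, sq]

lemma Hdelta_pos {Z : M2C} (hZ : Z ∈ SiegelH2) : 0 < Hdelta Z := hZ.2.det_pos

lemma exists_pos_mul_le_norm_jfac_embLow {Z : M2C} (hZ : Z ∈ SiegelH2) :
    ∃ r > 0, ∀ g : SL2ZT, r * ‖bottomRow g‖ ≤ ‖jfac (embLow g.1) Z‖ := by
  obtain ⟨r, hr, h⟩ := exists_pos_mul_norm_le_of_verticalStrip |(Z 1 1).re| (im_one_one_pos hZ)
  refine ⟨r, hr, fun g => ?_⟩
  simpa [jfac_embLow, bottomRow_spec] using h (Z 1 1) le_rfl le_rfl (bottomRow g)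

lemma jfac_embLow_ne_zero {Z : M2C} (hZ : Z ∈ SiegelH2) (g : SL2ZT) :
    jfac (embLow g.1) Z ≠ 0 := by
  obtain ⟨r, hr, h⟩ := exists_pos_mul_le_norm_jfac_embLow hZ
  exact norm_pos_iff.mp ((mul_pos hr (norm_pos_iff.mpr (bottomRow_ne_zero g))).trans_le (h g))

lemma exists_pos_mul_le_norm_jfac_emb {Z : M2C} (hZ : Z ∈ SiegelH2) :
    ∃ C > 0, ∀ x y : Fin 2 → ℤ,
      C * (‖x‖ * ‖y‖)
        ≤ ‖(x 0 * Z 0 0 + x 1) * (y 0 * Z 1 1 + y 1) - x 0 * y 0 * Z 0 1 ^ 2‖ := by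
  have hτ' := im_one_one_pos hZ
  have hβ : 0 < Hdelta Z / (Z 1 1).im := div_pos (Hdelta_pos hZ) hτ'
  obtain ⟨ρ, hρ, hρw⟩ :=
    exists_pos_mul_norm_le_of_verticalStrip (|(Z 0 0).re| + ‖Z 0 1 ^ 2‖ / (Z 1 1).im) hβ
  obtain ⟨r, hr, hrτ'⟩ := exists_pos_mul_norm_le_of_verticalStrip |(Z 1 1).re| hτ'
  refine ⟨ρ * r, mul_pos hρ hr, fun x y => ?_⟩
  rcases eq_or_ne y 0 with rfl | hy
  · simp
  have hj : r * ‖y‖ ≤ ‖(y 0 : ℂ) * Z 1 1 + y 1‖ := hrτ' _ le_rfl le_rfl y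
  have hj0 : ((y 0 : ℝ) : ℂ) * Z 1 1 + (y 1 : ℝ) ≠ 0 := by
    push_cast
    exact norm_pos_iff.mp ((mul_pos hr (norm_pos_iff.mpr hy)).trans_le hj)
  set w := Z 0 0 - ((y 0 : ℝ) : ℂ) * Z 0 1 ^ 2 / ((y 0 : ℝ) * Z 1 1 + (y 1 : ℝ))
  have hw_im : Hdelta Z / (Z 1 1).im ≤ w.im := by
    rw [Hdelta_eq hZ]
    exact im_sub_div_ge _ _ _ _ _ hτ' hj0
  have hw_re : |w.re| ≤ |(Z 0 0).re| + ‖Z 0 1 ^ 2‖ / (Z 1 1).im :=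
    calc |w.re| ≤ |(Z 0 0).re| + ‖((y 0 : ℝ) : ℂ) * Z 0 1 ^ 2 / ((y 0 : ℝ) * Z 1 1 + (y 1 : ℝ))‖ :=
          (abs_sub _ _).trans (by gcongr; exact abs_re_le_norm _)
      _ ≤ _ := by gcongr; exact norm_ofReal_mul_div_le _ _ _ _ hτ'
  have hfac : (x 0 * Z 0 0 + x 1) * (y 0 * Z 1 1 + y 1) - x 0 * y 0 * Z 0 1 ^ 2
      = ((y 0 : ℂ) * Z 1 1 + y 1) * (x 0 * w + x 1) := by
    simp only [w]
    push_cast at hj0 ⊢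
    field_simp
    ring
  rw [hfac, norm_mul]
  calc ρ * r * (‖x‖ * ‖y‖) = (r * ‖y‖) * (ρ * ‖x‖) := by ring
    _ ≤ _ := mul_le_mul hj (hρw w hw_re hw_im x) (by positivity) (norm_nonneg _)

lemma im_phiF_smul_embLow_ge {Z : M2C} (hZ : Z ∈ SiegelH2) (g : SL2ZT) :
    Hdelta Z / (Z 1 1).im ≤ (phiF (smul4 (embLow g.1) Z)).im := by
  have hj := jfac_embLow_ne_zero hZ g
  rw [jfac_embLow] at hj
  have hdet : g.1 0 0 * g.1 1 1 - g.1 0 1 * g.1 1 0 = 1 := by rw [← det_fin_two, g.2.1]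
  rw [phiF_smul_embLow _ _ hj, symm hZ, ← sq, Hdelta_eq hZ]
  exact im_add_div_ge _ _ _ hdet (im_one_one_pos hZ) hj

lemma injective_bottomRow_floor_phiF {Z : M2C} (hZ : Z ∈ SiegelH2) :
    Function.Injective fun g : SL2ZT =>
      (bottomRow g, ![1, ⌊(phiF (smul4 (embLow g.1) Z)).re⌋]) := by
  intro g g' h
  simp only [Prod.mk.injEq] at h
  obtain ⟨t, ht⟩ := exists_eq_T_mul_of_bottomRow_eq h.1
  have hj := jfac_embLow_ne_zero hZ g
  rw [jfac_embLow] at hj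
  have hshift := phiF_smul_embLow_T_mul t g.1 Z hj
  rw [← ht] at hshift
  have ht0 : t = 0 := by simpa [hshift] using congrFun h.2 1
  exact Subtype.ext (by rw [ht, ht0, Int.cast_zero, ← one_fin_two, one_mul])

end SiegelH2

lemma summable_norm_Ak_summand {k : ℤ} {s : ℂ} (hs : 2 < k + 2 * s.re) {Z : M2C}
    (hZ : Z ∈ SiegelH2) :
    Summable fun q : Quot relInf × Quot relInf =>
      ‖(Hdelta Z : ℂ) ^ s * chiF k s (embUp q.1.out.1 * embLow q.2.out.1) Z‖ := by
  obtain ⟨C, hC, hJ⟩ := SiegelH2.exists_pos_mul_le_norm_jfac_emb hZ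
  refine summable_of_le_mul_norm_rpow (fun q => (bottomRow q.1.out, bottomRow q.2.out))
    (bottomRow_out_injective.prodMap bottomRow_out_injective) hs
    (Hdelta Z ^ s.re * C ^ (-(k + 2 * s.re))) (fun _ => norm_nonneg _)
    fun q => ?_
  have hbound : C * (‖bottomRow q.1.out‖ * ‖bottomRow q.2.out‖)
      ≤ ‖jfac (emb q.1.out.1 q.2.out.1) Z‖ := by
    simpa [jfac_emb, bottomRow_spec, SiegelH2.symm hZ, sq] using
      hJ (bottomRow q.1.out) (bottomRow q.2.out)
  rw [embUp_mul_embLow, chiF_eq_weightPow]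
  exact norm_ofReal_cpow_mul_weightPow_le (SiegelH2.Hdelta_pos hZ) (by linarith) hC
    (mul_pos (norm_pos_iff.mpr (bottomRow_ne_zero _)) (norm_pos_iff.mpr (bottomRow_ne_zero _)))
    hbound

lemma summable_norm_Bk_summand {k : ℤ} {s : ℂ} (hs : 2 < k + 2 * s.re) {Z : M2C}
    (hZ : Z ∈ SiegelH2) :
    Summable fun g : SL2ZT =>
      ‖(Hdelta Z : ℂ) ^ s * (PhiF k s (smul4 (embLow g.1) Z) * chiF k s (embLow g.1) Z)‖ := by
  obtain ⟨r, hr, hj⟩ := SiegelH2.exists_pos_mul_le_norm_jfac_embLow hZ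
  obtain ⟨ρ, hρ, hφ⟩ := exists_pos_mul_norm_floor_le
    (div_pos (SiegelH2.Hdelta_pos hZ) (SiegelH2.im_one_one_pos hZ))
  refine summable_of_le_mul_norm_rpow _ (SiegelH2.injective_bottomRow_floor_phiF hZ) hs
    (Hdelta Z ^ s.re * (ρ * r) ^ (-(k + 2 * s.re))) (fun _ => norm_nonneg _) fun g => ?_
  set φ := phiF (smul4 (embLow g.1) Z)
  have hv : 0 < ‖![1, ⌊φ.re⌋]‖ := norm_pos_iff.mpr fun h => by simpa using congrFun h 0
  rw [PhiF_eq_weightPow, chiF_eq_weightPow, weightPow_mul]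
  refine norm_ofReal_cpow_mul_weightPow_le (SiegelH2.Hdelta_pos hZ) (by linarith) (mul_pos hρ hr)
    (mul_pos (norm_pos_iff.mpr (bottomRow_ne_zero g)) hv) ?_
  calc ρ * r * (‖bottomRow g‖ * ‖![1, ⌊φ.re⌋]‖)
        = (ρ * ‖![1, ⌊φ.re⌋]‖) * (r * ‖bottomRow g‖) := by ring
    _ ≤ ‖φ‖ * ‖jfac (embLow g.1) Z‖ :=
        mul_le_mul (hφ φ (SiegelH2.im_phiF_smul_embLow_ge hZ g)) (hj g) (by positivity)
          (norm_nonneg _)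
    _ = ‖φ * jfac (embLow g.1) Z‖ := (norm_mul _ _).symm

/-- (i) `Im φ(Z) > 0` on `ℍ₂`; (ii) absolute convergence of the double series
defining `A_k(Z,s)`; (iii) absolute convergence of the series defining `B_k(Z,s)`. -/
theorem Ak_Bk_converge (k : ℤ) (hk : Even k) (s : ℂ) (hs : 2 * s.re + (k : ℝ) > 3)
    (Z : M2C) (hZ : Z ∈ SiegelH2) :
    0 < (phiF Z).im ∧
    (∃ F : Quot relInf × Quot relInf → ℂ,
      (∀ g h : SL2ZT, F (Quot.mk relInf g, Quot.mk relInf h)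
          = ((Hdelta Z : ℂ)) ^ s * chiF k s (embUp g.1 * embLow h.1) Z) ∧
      Summable (fun q => ‖F q‖)) ∧
    Summable (fun g : SL2ZT =>
      ‖((Hdelta Z : ℂ)) ^ s * (PhiF k s (smul4 (embLow g.1) Z) * chiF k s (embLow g.1) Z)‖) := by
  have hs' : 2 < (k : ℝ) + 2 * s.re := by linarith
  let F : Quot relInf × Quot relInf → ℂ := fun q =>
    Quot.lift₂ (fun g h : SL2ZT => (Hdelta Z : ℂ) ^ s * chiF k s (embUp g.1 * embLow h.1) Z)
      (fun g h h' ⟨γ, hγ, hh'⟩ => by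
        simp only [embUp_mul_embLow, hh', chiF_emb_mul_right hk s hγ])
      (fun g g' h ⟨γ, hγ, hg'⟩ => by
        simp only [embUp_mul_embLow, hg', chiF_emb_mul_left hk s hγ])
      q.1 q.2
  refine ⟨SiegelH2.im_phiF_pos hZ, ⟨F, fun g h => rfl, ?_⟩, summable_norm_Bk_summand hs' hZ⟩
  refine (summable_norm_Ak_summand hs' hZ).congr fun q => ?_
  simp only [F]
  conv_rhs => rw [← q.1.out_eq, ← q.2.out_eq]
  rfl
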